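/- arXiv:2505.06099 — 2 statements merged into one kernel-verified Lean document; each statement's English description precedes it below -/
import Mathlib

section
/- If n = p₁^{r₁}⋯p_t^{r_t} with t ≥ 2 distinct primes and 3 ≤ p₁ < ⋯ < p_t, then the independence number of the unitary Cayley graph of Z_n equals n/p₁ = p₁^{r₁-1} p₂^{r₂} ⋯ p_t^{r_t}. -/
/-- The unitary Cayley graph of a commutative ring: vertices are ring elements,
with `x ~ y` iff `x ≠ y` and `x - y` is a unit. -/
def unitaryCayley (R : Type*) [CommRing R] : SimpleGraph R where
  Adj x y := x ≠ y ∧ IsUnit (x - y)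
  symm := ⟨by
    rintro x y ⟨hne, hu⟩
    exact ⟨hne.symm, by simpa [neg_sub] using hu.neg⟩⟩
  loopless := ⟨by rintro x ⟨h, -⟩; exact h rfl⟩

/-- A packing `k`-coloring: every vertex gets a color in `{1, …, k}`, and any two
distinct vertices with the same color `i` are at distance greater than `i`
(`edist` equals `⊤` for unreachable pairs, which counts as distance greater than `i`). -/
def SimpleGraph.IsPackingColoring {V : Type*} (G : SimpleGraph V) (k : ℕ) (c : V → ℕ) : Prop :=
  (∀ v, 1 ≤ c v ∧ c v ≤ k) ∧
    ∀ u v, u ≠ v → c u = c v → (c u : ℕ∞) < G.edist u v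

/-- The packing chromatic number: the least `k` admitting a packing `k`-coloring. -/
noncomputable def SimpleGraph.packingChromaticNumber {V : Type*} (G : SimpleGraph V) : ℕ :=
  sInf {k | ∃ c : V → ℕ, G.IsPackingColoring k c}

/-- The independence number: the largest cardinality of a set of pairwise
nonadjacent vertices. -/
noncomputable def SimpleGraph.indepNumber {V : Type*} (G : SimpleGraph V) : ℕ :=
  sSup {n | ∃ s : Finset V, (∀ u ∈ s, ∀ v ∈ s, u ≠ v → ¬ G.Adj u v) ∧ s.card = n}

/-- The tensor (direct, categorical) product of two simple graphs. -/
def tensorProd {V W : Type*} (G : SimpleGraph V) (H : SimpleGraph W) :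
    SimpleGraph (V × W) where
  Adj a b := G.Adj a.1 b.1 ∧ H.Adj a.2 b.2
  symm := ⟨fun _ _ ⟨h1, h2⟩ => ⟨h1.symm, h2.symm⟩⟩
  loopless := ⟨fun a h => G.irrefl h.1⟩

/-- The tensor (direct, categorical) product of a family of simple graphs. -/
def tensorPi {ι : Type*} [Nonempty ι] {V : ι → Type*} (G : ∀ i, SimpleGraph (V i)) :
    SimpleGraph (∀ i, V i) where
  Adj a b := ∀ i, (G i).Adj (a i) (b i)
  symm := ⟨fun _ _ h i => (h i).symm⟩
  loopless := ⟨fun a h => (G (Classical.arbitrary ι)).irrefl (h _)⟩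

/-!
Multiples of `p₁` form an independent set, since their differences are divisible by `p₁` and so
are not units. Conversely, `0, 1, …, p₁ - 1` form a clique, because each difference of two of them
is a positive integer below `p₁`, hence coprime to `n`. In a translation-invariant graph on a finite
group `A`, a clique `K` and an independent set `I` satisfy `|K| |I| ≤ |A|`: the map `(k, x) ↦ -k + x` on
`K × I` is injective, since a collision `-k₁ + x₁ = -k₂ + x₂` with `k₁ ≠ k₂` translates the edge
`k₁k₂` to an edge `x₁x₂` inside `I`. Hence `α ≤ n / p₁`.
-/

open Finset

theorem SimpleGraph.indepNumber_eq_of_isIndepSet {V : Type*} {G : SimpleGraph V} {m : ℕ}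
    (s : Finset V) (hs : G.IsIndepSet (s : Set V)) (hcard : #s = m)
    (hle : ∀ t : Finset V, G.IsIndepSet (t : Set V) → #t ≤ m) : G.indepNumber = m :=
  IsGreatest.csSup_eq ⟨⟨s, fun _ hu _ hv => hs hu hv, hcard⟩,
    by rintro _ ⟨t, ht, rfl⟩; exact hle t fun _ hu _ hv => ht _ hu _ hv⟩

theorem SimpleGraph.card_mul_card_le_of_isClique_of_isIndepSet {A : Type*} [AddGroup A]
    [Fintype A] [DecidableEq A] {G : SimpleGraph A}
    (hG : ∀ a x y, G.Adj x y → G.Adj (x + a) (y + a)) {K I : Finset A}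
    (hK : G.IsClique (K : Set A)) (hI : G.IsIndepSet (I : Set A)) :
    #K * #I ≤ Fintype.card A := by
  rw [← card_product, ← card_univ]
  refine card_le_card_of_injOn (fun q => -q.1 + q.2) (fun _ _ => mem_coe.2 (mem_univ _)) ?_
  rintro ⟨k₁, x₁⟩ h₁ ⟨k₂, x₂⟩ h₂ (heq : -k₁ + x₁ = -k₂ + x₂)
  simp only [coe_product, Set.mem_prod, mem_coe] at h₁ h₂
  by_cases hk : k₁ = k₂
  · subst hk
    simp [add_left_cancel heq]
  · have hx₁ : k₁ + (-k₁ + x₁) = x₁ := add_neg_cancel_left k₁ x₁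
    have hx₂ : k₂ + (-k₁ + x₁) = x₂ := by rw [heq, add_neg_cancel_left]
    have hadj := hG (-k₁ + x₁) _ _ (hK h₁.1 h₂.1 hk)
    rw [hx₁, hx₂] at hadj
    exact absurd hadj (hI h₁.2 h₂.2 hadj.ne)

section unitaryCayley

variable {R : Type*} [CommRing R]

theorem unitaryCayley_adj_add_right (a : R) {x y : R} (h : (unitaryCayley R).Adj x y) :
    (unitaryCayley R).Adj (x + a) (y + a) :=
  ⟨fun hxy => h.1 (add_right_cancel hxy), by rw [add_sub_add_right_eq_sub]; exact h.2⟩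

theorem isIndepSet_setOf_dvd {a : R} (ha : ¬IsUnit a) :
    (unitaryCayley R).IsIndepSet {x | a ∣ x} :=
  fun _ hx _ hy _ hadj => ha (isUnit_of_dvd_unit (dvd_sub hx hy) hadj.2)

end unitaryCayley

namespace ZMod

theorem natCast_injOn_Iio (n : ℕ) : Set.InjOn (Nat.cast : ℕ → ZMod n) (Set.Iio n) :=
  fun a ha b hb h => by
    rwa [natCast_eq_natCast_iff', Nat.mod_eq_of_lt ha, Nat.mod_eq_of_lt hb] at h

theorem isUnit_natCast_sub_natCast {n a b : ℕ} (hab : a ≠ b) (ha : a < n.minFac)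
    (hb : b < n.minFac) : IsUnit ((a : ZMod n) - b) := by
  wlog hba : b < a generalizing a b
  · rw [← neg_sub, IsUnit.neg_iff]
    exact this (Ne.symm hab) hb ha (by omega)
  rw [← Nat.cast_sub hba.le, isUnit_iff_coprime]
  exact (Nat.coprime_of_lt_minFac (by omega) (by omega)).symm

theorem isClique_unitaryCayley_range_minFac (n : ℕ) :
    (unitaryCayley (ZMod n)).IsClique
      ((range n.minFac).image (Nat.cast : ℕ → ZMod n) : Set (ZMod n)) := by
  simp only [coe_image, coe_range]
  rintro _ ⟨a, ha, rfl⟩ _ ⟨b, hb, rfl⟩ hne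
  exact ⟨hne, isUnit_natCast_sub_natCast (fun h => hne (congrArg _ h)) ha hb⟩

theorem not_isUnit_natCast_of_dvd {d n : ℕ} (hd : d ∣ n) (hd1 : d ≠ 1) :
    ¬IsUnit (d : ZMod n) := by
  rw [isUnit_iff_coprime]
  exact fun h => hd1 (h.eq_one_of_dvd hd)

theorem indepNumber_unitaryCayley {n : ℕ} (hn : 1 < n) :
    (unitaryCayley (ZMod n)).indepNumber = n / n.minFac := by
  have : NeZero n := ⟨by omega⟩
  set p := n.minFac
  have hp : 0 < p := n.minFac_pos
  have hpn : p * (n / p) = n := Nat.mul_div_cancel' n.minFac_dvd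
  have hp1 : p ≠ 1 := by rw [Ne, Nat.minFac_eq_one_iff]; omega
  have hmul : Set.MapsTo (p * ·) (Set.Iio (n / p)) (Set.Iio n) :=
    fun k hk => hpn ▸ Nat.mul_lt_mul_of_pos_left hk hp
  refine SimpleGraph.indepNumber_eq_of_isIndepSet
    ((range (n / p)).image fun k => ((p * k : ℕ) : ZMod n)) ?_ ?_ fun t ht => ?_
  · refine (isIndepSet_setOf_dvd (not_isUnit_natCast_of_dvd n.minFac_dvd hp1)).mono ?_
    intro _ hx
    obtain ⟨k, -, rfl⟩ := mem_image.1 hx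
    exact ⟨k, Nat.cast_mul _ _⟩
  · refine (card_image_of_injOn ?_).trans (card_range _)
    rw [coe_range]
    exact (natCast_injOn_Iio n).comp (mul_right_injective₀ hp.ne').injOn hmul
  · have hle := SimpleGraph.card_mul_card_le_of_isClique_of_isIndepSet
      (fun a _ _ => unitaryCayley_adj_add_right a) (isClique_unitaryCayley_range_minFac n) ht
    rw [card_image_of_injOn ((natCast_injOn_Iio n).mono (by simpa using n.minFac_le (by omega))),
      card_range, card] at hle
    exact (Nat.le_div_iff_mul_le hp).2 (by rwa [mul_comm])

end ZMod

theorem stmt9_general (n : ℕ) (hodd : 3 ≤ n.minFac) :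
    (unitaryCayley (ZMod n)).indepNumber = n / n.minFac := by
  have hn : 1 < n := by
    by_contra! h
    interval_cases n <;> simp at hodd
  exact ZMod.indepNumber_unitaryCayley hn

theorem stmt9 (n : ℕ) (ht : 2 ≤ n.primeFactors.card) (hodd : 3 ≤ n.minFac) :
    (unitaryCayley (ZMod n)).indepNumber = n / n.minFac :=
  stmt9_general n hodd
end

section
/- If n = p₁^{r₁}⋯p_t^{r_t} with t ≥ 2 and odd primes 3 ≤ p₁ < ⋯ < p_t, then the packing chromatic number of the unitary Cayley graph of Z_n equals p₁^{r₁-1} p₂^{r₂}⋯p_t^{r_t}(p₁ - 1) + 1. -/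
/-- The independence number: the largest cardinality of a set of pairwise
nonadjacent vertices. -/
noncomputable def SimpleGraph.indepNumOld {V : Type*} (G : SimpleGraph V) : ℕ :=
  sSup {n | ∃ s : Finset V, (∀ u ∈ s, ∀ v ∈ s, u ≠ v → ¬ G.Adj u v) ∧ s.card = n}

lemma isUnit_pair {M N : Type*} [Monoid M] [Monoid N] {x : M} {y : N}
    (hx : IsUnit x) (hy : IsUnit y) : IsUnit (x, y) := by
  obtain ⟨u, rfl⟩ := hx; obtain ⟨v, rfl⟩ := hy
  exact ⟨⟨((u : M), (v : N)), ((↑u⁻¹ : M), (↑v⁻¹ : N)),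
    by simp [Prod.ext_iff], by simp [Prod.ext_iff]⟩, rfl⟩

lemma primePow_sum_units {q k : ℕ} (hq : q.Prime) (hq3 : 3 ≤ q) (hk : 0 < k)
    (d : ZMod (q ^ k)) : ∃ a : ZMod (q ^ k), IsUnit a ∧ IsUnit (d - a) := by
  haveI : Fact q.Prime := ⟨hq⟩
  haveI : NeZero (q ^ k) := ⟨pow_ne_zero k hq.pos.ne'⟩
  have hdvd : q ∣ q ^ k := dvd_pow_self q hk.ne'
  set φ : ZMod (q ^ k) →+* ZMod q := ZMod.castHom hdvd (ZMod q) with hφ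
  have key : ∀ x : ZMod (q ^ k), φ x ≠ 0 → IsUnit x := by
    intro x hx
    rw [← ZMod.natCast_zmod_val x, ZMod.isUnit_iff_coprime,
      Nat.coprime_pow_right_iff hk, Nat.coprime_comm, hq.coprime_iff_not_dvd]
    intro hdvd'
    apply hx
    rw [hφ, ZMod.castHom_apply, ← ZMod.natCast_val, ZMod.natCast_eq_zero_iff]
    exact hdvd'
  by_cases h1 : IsUnit (d - 1)
  · exact ⟨1, isUnit_one, h1⟩
  · have hφd : φ d = 1 := by
      by_contra hne
      exact h1 (key _ (by rw [map_sub, map_one]; exact sub_ne_zero.mpr hne))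
    refine ⟨2, key 2 ?_, key _ ?_⟩
    · rw [show ((2 : ZMod (q^k))) = ((2:ℕ) : ZMod (q^k)) by norm_cast, map_natCast]
      intro h2
      rw [ZMod.natCast_eq_zero_iff] at h2
      exact absurd (Nat.le_of_dvd (by norm_num) h2) (by omega)
    · rw [map_sub, hφd, show ((2 : ZMod (q^k))) = ((2:ℕ) : ZMod (q^k)) by norm_cast,
        map_natCast]
      intro h0
      have : ((1:ℕ) : ZMod q) = 0 := by
        have := sub_eq_zero.mp h0
        push_cast at this ⊢
        linear_combination -this
      rw [ZMod.natCast_eq_zero_iff] at this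
      exact absurd (Nat.le_of_dvd (by norm_num) this) (by omega)

lemma odd_sum_units : ∀ n : ℕ, Odd n → ∀ d : ZMod n, ∃ a, IsUnit a ∧ IsUnit (d - a) := by
  intro n
  induction n using Nat.strong_induction_on with
  | _ n ih =>
    intro hodd
    have hn0 : n ≠ 0 := by rintro rfl; simp at hodd
    rcases eq_or_ne n 1 with rfl | hn1
    · intro d
      have h01 : (0 : ZMod 1) = 1 := Subsingleton.elim _ _
      exact ⟨0, h01 ▸ isUnit_one, by
        rw [sub_zero]; exact (Subsingleton.elim d (1 : ZMod 1)) ▸ isUnit_one⟩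
    · have hq : n.minFac.Prime := Nat.minFac_prime hn1
      have hq3 : 3 ≤ n.minFac := by
        have h2 := hq.two_le
        rcases eq_or_lt_of_le h2 with he | hl
        · exact absurd (even_iff_two_dvd.mpr (he ▸ Nat.minFac_dvd n))
            (Nat.not_even_iff_odd.mpr hodd)
        · omega
      have hqdvd : n.minFac ∣ n := Nat.minFac_dvd n
      have hk : 0 < n.factorization n.minFac := hq.factorization_pos_of_dvd hn0 hqdvd
      have hAB : n.minFac ^ n.factorization n.minFac * ordCompl[n.minFac] n = n :=
        Nat.ordProj_mul_ordCompl_eq_self n n.minFac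
      have hcop : Nat.Coprime (n.minFac ^ n.factorization n.minFac) (ordCompl[n.minFac] n) :=
        Nat.Coprime.pow_left _ (Nat.coprime_ordCompl hq hn0)
      have hBodd : Odd (ordCompl[n.minFac] n) := by
        rw [← hAB, Nat.odd_mul] at hodd; exact hodd.2
      have hBlt : ordCompl[n.minFac] n < n := by
        apply Nat.div_lt_self (Nat.pos_of_ne_zero hn0)
        exact Nat.one_lt_pow hk.ne' hq.one_lt
      rw [← hAB]
      intro d
      set e := ZMod.chineseRemainder hcop with he
      obtain ⟨a1, ha1, hb1⟩ := primePow_sum_units hq hq3 hk (e d).1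
      obtain ⟨a2, ha2, hb2⟩ := ih _ hBlt hBodd (e d).2
      refine ⟨e.symm (a1, a2), ?_, ?_⟩
      · exact (isUnit_pair ha1 ha2).map (e.symm : _ ≃+* _)
      · have hd : d - e.symm (a1, a2) = e.symm ((e d).1 - a1, (e d).2 - a2) := by
          apply e.injective
          simp [map_sub, Prod.ext_iff]
        rw [hd]
        exact (isUnit_pair hb1 hb2).map (e.symm : _ ≃+* _)

lemma isUnit_cast_of_lt_minFac {n d : ℕ} (h0 : 0 < d) (h : d < n.minFac) :
    IsUnit ((d : ℕ) : ZMod n) := by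
  rw [ZMod.isUnit_iff_coprime]
  by_contra hc
  have hg1 : Nat.gcd d n ≠ 1 := hc
  have hgpos : 0 < Nat.gcd d n := Nat.gcd_pos_of_pos_left n h0
  have hq : (Nat.gcd d n).minFac.Prime := Nat.minFac_prime (by omega)
  have hqd : (Nat.gcd d n).minFac ∣ d := (Nat.minFac_dvd _).trans (Nat.gcd_dvd_left d n)
  have hqn : (Nat.gcd d n).minFac ∣ n := (Nat.minFac_dvd _).trans (Nat.gcd_dvd_right d n)
  have h1 : n.minFac ≤ (Nat.gcd d n).minFac := Nat.minFac_le_of_dvd hq.two_le hqn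
  have h2 : (Nat.gcd d n).minFac ≤ d := Nat.le_of_dvd h0 hqd
  omega

lemma edist_le_two {n : ℕ} (hn : 1 < n)
    (hsum : ∀ d : ZMod n, ∃ a, IsUnit a ∧ IsUnit (d - a)) (u v : ZMod n) :
    (unitaryCayley (ZMod n)).edist u v ≤ 2 := by
  haveI : NeZero n := ⟨by omega⟩
  haveI : Nontrivial (ZMod n) := ZMod.nontrivial_iff.mpr (by omega)
  rcases eq_or_ne u v with rfl | huv
  · simp
  obtain ⟨a, ha, hb⟩ := hsum (u - v)
  have hane : a ≠ 0 := fun h => not_isUnit_zero (h ▸ ha)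
  have hbne : u - v - a ≠ 0 := fun h => by rw [h] at hb; exact not_isUnit_zero hb
  have h1 : (unitaryCayley (ZMod n)).Adj u (u - a) :=
    ⟨fun h => hane (sub_eq_self.mp h.symm), by simpa using ha⟩
  have h2 : (unitaryCayley (ZMod n)).Adj (u - a) v :=
    ⟨fun h => hbne (by rw [← h]; ring), by convert hb using 1; ring⟩
  calc (unitaryCayley (ZMod n)).edist u v
      ≤ (unitaryCayley (ZMod n)).edist u (u - a) + (unitaryCayley (ZMod n)).edist (u - a) v :=
        SimpleGraph.edist_triangle
    _ ≤ 1 + 1 := add_le_add (le_of_eq (SimpleGraph.edist_eq_one_iff_adj.mpr h1))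
        (le_of_eq (SimpleGraph.edist_eq_one_iff_adj.mpr h2))
    _ = 2 := by norm_num

lemma indep_bound {n : ℕ} (hn : 1 < n) (I : Finset (ZMod n))
    (hI : ∀ u ∈ I, ∀ v ∈ I, u ≠ v → ¬ (unitaryCayley (ZMod n)).Adj u v) :
    I.card * n.minFac ≤ n := by
  haveI : NeZero n := ⟨by omega⟩
  classical
  set p := n.minFac with hp
  have hpn : p ≤ n := Nat.minFac_le (by omega)
  set C : Finset (ZMod n) := Finset.image (Nat.cast : ℕ → ZMod n) (Finset.range p) with hC
  have hCcard : C.card = p := by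
    rw [hC, Finset.card_image_of_injOn, Finset.card_range]
    intro a ha b hb hab
    simp only [Finset.coe_range, Set.mem_Iio] at ha hb
    have := congrArg ZMod.val hab
    rwa [ZMod.val_cast_of_lt (by omega), ZMod.val_cast_of_lt (by omega)] at this
  have hinj : Set.InjOn (fun x : ZMod n × ZMod n => x.1 - x.2) ↑(I ×ˢ C) := by
    rintro ⟨i, c⟩ h1 ⟨i', c'⟩ h2 heq
    simp only [Finset.coe_product, Set.mem_prod, Finset.mem_coe] at h1 h2
    have heq : i - c = i' - c' := heq
    have hii : i = i' := by
      by_contra hne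
      apply hI i h1.1 i' h2.1 hne
      refine ⟨hne, ?_⟩
      have hd : i - i' = c - c' := by linear_combination heq
      rw [hd]
      obtain ⟨a, ha, rfl⟩ := Finset.mem_image.mp h1.2
      obtain ⟨b, hb, rfl⟩ := Finset.mem_image.mp h2.2
      simp only [Finset.mem_range] at ha hb
      have hab : a ≠ b := by
        rintro rfl
        apply hne
        have h0 : i - i' = 0 := by rw [hd]; ring
        linear_combination h0
      rcases Nat.lt_or_ge a b with hlt | hge
      · have hcast : ((a : ZMod n) - b) = -(((b - a : ℕ) : ZMod n)) := by
          push_cast [Nat.cast_sub hlt.le]; ring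
        rw [hcast]
        exact (isUnit_cast_of_lt_minFac (by omega) (by omega)).neg
      · have hlt : b < a := by omega
        have hcast : ((a : ZMod n) - b) = (((a - b : ℕ) : ZMod n)) := by
          push_cast [Nat.cast_sub hlt.le]; ring
        rw [hcast]
        exact isUnit_cast_of_lt_minFac (by omega) (by omega)
    subst hii
    have : c = c' := by linear_combination -heq
    rw [this]
  have hle : (I ×ˢ C).card ≤ (Finset.univ : Finset (ZMod n)).card :=
    Finset.card_le_card_of_injOn _ (fun a _ => Finset.mem_univ _) hinj
  rwa [Finset.card_product, hCcard, Finset.card_univ, ZMod.card] at hle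

lemma not_unit_minFac {n : ℕ} (hn : 1 < n) : ¬ IsUnit ((n.minFac : ℕ) : ZMod n) := by
  rw [ZMod.isUnit_iff_coprime]
  intro hc
  have h1 : Nat.gcd n.minFac n = n.minFac := Nat.gcd_eq_left (Nat.minFac_dvd n)
  have h2 := (Nat.minFac_prime hn.ne').two_le
  rw [Nat.Coprime, h1] at hc
  omega

theorem stmt10 (n : ℕ) (ht : 2 ≤ n.primeFactors.card) (hodd : 3 ≤ n.minFac) :
    (unitaryCayley (ZMod n)).packingChromaticNumber = n - n / n.minFac + 1 := by
  classical
  have hn0 : n ≠ 0 := by rintro rfl; simp [Nat.minFac_zero] at hodd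
  have hn1 : n ≠ 1 := by rintro rfl; simp [Nat.minFac_one] at hodd
  have hn : 1 < n := by omega
  haveI : NeZero n := ⟨hn0⟩
  set p := n.minFac with hpdef
  have hpp : p.Prime := Nat.minFac_prime hn1
  have hpdvd : p ∣ n := Nat.minFac_dvd n
  have hoddn : Odd n := by
    rcases Nat.even_or_odd n with he | ho
    · exfalso
      have : p ≤ 2 := Nat.minFac_le_of_dvd (by norm_num) he.two_dvd
      omega
    · exact ho
  have hsum := odd_sum_units n hoddn
  have hppos : 0 < p := hpp.pos
  have hdivlt : n / p < n := Nat.div_lt_self (by omega) hpp.one_lt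
  have hmem : (n - n / p + 1) ∈
      {k | ∃ c : ZMod n → ℕ, (unitaryCayley (ZMod n)).IsPackingColoring k c} := by
    set S : Finset (ZMod n) :=
      Finset.univ.filter (fun x : ZMod n => ((p : ℕ) : ZMod n) ∣ x) with hS
    set T : Finset (ZMod n) :=
      Finset.univ.filter (fun x : ZMod n => ¬ ((p : ℕ) : ZMod n) ∣ x) with hT
    have hmul : p * (n / p) = n := Nat.mul_div_cancel' hpdvd
    have hlt : ∀ a : Fin (n / p), p * (a : ℕ) < n := by
      intro a
      calc p * (a : ℕ) < p * (n / p) := by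
            exact Nat.mul_lt_mul_of_le_of_lt (le_refl p) a.isLt hppos
        _ = n := hmul
    have hScard : n / p ≤ S.card := by
      have key := Finset.card_le_card_of_injOn
        (s := (Finset.univ : Finset (Fin (n / p)))) (t := S)
        (fun a : Fin (n / p) => ((p * (a : ℕ) : ℕ) : ZMod n)) ?_ ?_
      · simpa using key
      · intro a _
        rw [hS, Finset.mem_coe, Finset.mem_filter]
        refine ⟨Finset.mem_univ _, ?_⟩
        push_cast
        exact dvd_mul_right _ _
      · intro a _ b _ hab
        have := congrArg ZMod.val hab
        rw [ZMod.val_cast_of_lt (hlt a), ZMod.val_cast_of_lt (hlt b)] at this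
        exact Fin.ext (Nat.eq_of_mul_eq_mul_left hppos this)
    have hTS : T = Sᶜ := by
      rw [hS, hT]; ext x; simp
    have hTcard : T.card ≤ n - n / p := by
      rw [hTS, Finset.card_compl, ZMod.card]
      omega
    set e := T.equivFin with he
    refine ⟨fun x => if h : x ∈ T then (e ⟨x, h⟩ : ℕ) + 2 else 1, ?_, ?_⟩
    · intro v
      by_cases h : v ∈ T
      · simp only [dif_pos h]
        have hvlt := (e ⟨v, h⟩).isLt
        exact ⟨by omega, by omega⟩
      · simp only [dif_neg h]
        exact ⟨le_refl 1, by omega⟩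
    · intro u v huv hc
      by_cases hu : u ∈ T <;> by_cases hv : v ∈ T
      · exfalso
        simp only [dif_pos hu, dif_pos hv] at hc
        have : e ⟨u, hu⟩ = e ⟨v, hv⟩ := Fin.ext (by omega)
        exact huv (congrArg Subtype.val (e.injective this))
      · exfalso; simp only [dif_pos hu, dif_neg hv] at hc; omega
      · exfalso; simp only [dif_neg hu, dif_pos hv] at hc; omega
      · simp only [dif_neg hu, Nat.cast_one]
        have hpu : ((p : ℕ) : ZMod n) ∣ u := by
          by_contra hcon
          exact hu (by rw [hT, Finset.mem_filter]; exact ⟨Finset.mem_univ _, hcon⟩)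
        have hpv : ((p : ℕ) : ZMod n) ∣ v := by
          by_contra hcon
          exact hv (by rw [hT, Finset.mem_filter]; exact ⟨Finset.mem_univ _, hcon⟩)
        have hadj : ¬ (unitaryCayley (ZMod n)).Adj u v := by
          rintro ⟨-, hunit⟩
          exact not_unit_minFac hn (isUnit_of_dvd_unit (dvd_sub hpu hpv) hunit)
        refine lt_of_le_of_ne ?_ ?_
        · exact Order.one_le_iff_pos.mpr (SimpleGraph.edist_pos_of_ne huv)
        · intro h
          exact hadj (SimpleGraph.edist_eq_one_iff_adj.mp h.symm)
  have hlow : ∀ k ∈ {k | ∃ c : ZMod n → ℕ, (unitaryCayley (ZMod n)).IsPackingColoring k c},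
      n - n / p + 1 ≤ k := by
    rintro k ⟨c, hb, hd⟩
    have hk1 : 1 ≤ k := le_trans (hb 0).1 (hb 0).2
    have hfib : (Finset.univ : Finset (ZMod n)).card
        = ∑ i ∈ Finset.Icc 1 k, (Finset.univ.filter (fun x => c x = i)).card :=
      Finset.card_eq_sum_card_fiberwise
        (fun x _ => Finset.mem_Icc.mpr ⟨(hb x).1, (hb x).2⟩)
    have h1 : (Finset.univ.filter (fun x => c x = 1)).card ≤ n / p := by
      rw [Nat.le_div_iff_mul_le hppos]
      apply indep_bound hn
      intro u hu v hv hne hadj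
      have hcu : c u = 1 := (Finset.mem_filter.mp hu).2
      have hcv : c v = 1 := (Finset.mem_filter.mp hv).2
      have hlt := hd u v hne (hcu.trans hcv.symm)
      rw [hcu, SimpleGraph.edist_eq_one_iff_adj.mpr hadj] at hlt
      exact absurd hlt (by norm_num)
    have h2 : ∀ i ∈ Finset.Icc 2 k, (Finset.univ.filter (fun x => c x = i)).card ≤ 1 := by
      intro i hi
      apply Finset.card_le_one.mpr
      intro u hu v hv
      by_contra hne
      have hcu := (Finset.mem_filter.mp hu).2
      have hcv := (Finset.mem_filter.mp hv).2
      have hlt := hd u v hne (hcu.trans hcv.symm)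
      have hle := edist_le_two hn hsum u v
      have hi2 : ((i : ℕ) : ℕ∞) < 2 := lt_of_lt_of_le (hcu ▸ hlt) hle
      have hi2' : i < 2 := by exact_mod_cast hi2
      have := (Finset.mem_Icc.mp hi).1
      omega
    have hsplit : Finset.Icc 1 k = insert 1 (Finset.Icc 2 k) := by
      ext x
      simp only [Finset.mem_Icc, Finset.mem_insert]
      omega
    have hsum2 : ∑ i ∈ Finset.Icc 2 k, (Finset.univ.filter (fun x => c x = i)).card
        ≤ k - 1 := by
      calc ∑ i ∈ Finset.Icc 2 k, (Finset.univ.filter (fun x => c x = i)).card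
          ≤ ∑ _i ∈ Finset.Icc 2 k, 1 := Finset.sum_le_sum h2
        _ = k - 1 := by rw [Finset.sum_const, smul_eq_mul, mul_one, Nat.card_Icc]; omega
    have hcards : n ≤ n / p + (k - 1) := by
      have hcardu : (Finset.univ : Finset (ZMod n)).card = n := by
        rw [Finset.card_univ, ZMod.card]
      rw [hcardu, hsplit, Finset.sum_insert (by simp)] at hfib
      omega
    omega
  rw [SimpleGraph.packingChromaticNumber]
  exact le_antisymm (Nat.sInf_le hmem) (le_csInf ⟨_, hmem⟩ hlow)
end
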